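/- There exist n ≥ 1 and a subgroup Γ of the group of invertible affine transformations of ℝⁿ such that Γ acts properly discontinuously, freely and cocompactly on ℝⁿ, and Γ has no abelian subgroup of finite index (in particular Γ is not virtually ℤⁿ). -/

import Mathlib

/-!
Let `ℤ² ⋊_A ℤ`, with `A = [[2, 1], [1, 1]]` Arnold's cat map, act on `ℝ³ = ℝ² × ℝ` by
`(v, k) · (x, s) = (A^k (x + v), s + k)`. If `(v, k)` sends a point of a compact set `K` into `K`,
then `k` is bounded by the spread of `K` in the last coordinate, and for each such `k` the lattice
vector `v` lies in the compact set `A⁻ᵏ K - K`; so only finitely many elements qualify, and the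
case of a single point gives freeness. Every orbit meets `[0, 1]³`: take `k = ⌊s⌋` and
`v = ⌊A⁻ᵏ x⌋`. Finally, a finite-index subgroup contains some `(0, m)` and some `(p e₁, 0)` with
`m, p > 0`; these commute only if `A^m e₁ = e₁`, which fails since `A` maps the positive quadrant
strictly into itself.
-/

open Set Filter Function

theorem not_exists_abelian_finiteIndex_of_pow_not_commute {G : Type*} [Group G] {t a : G}
    (h : ∀ m p : ℕ, 0 < m → 0 < p → ¬Commute (t ^ m) (a ^ p)) :
    ¬∃ H : Subgroup G, H.FiniteIndex ∧ ∀ x y : H, x * y = y * x := by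
  rintro ⟨H, hH, hcomm⟩
  obtain ⟨m, hm, -, htm⟩ := H.exists_pow_mem_of_index_ne_zero hH.index_ne_zero t
  obtain ⟨p, hp, -, hap⟩ := H.exists_pow_mem_of_index_ne_zero hH.index_ne_zero a
  exact h m p hm hp (congrArg Subtype.val (hcomm ⟨_, htm⟩ ⟨_, hap⟩))

theorem AffineEquiv.linear_apply_eq_of_commute_constVAdd {k V : Type*} [Ring k] [AddCommGroup V]
    [Module k V] {f : V ≃ᵃ[k] V} {v : V} (h : Commute f (AffineEquiv.constVAdd k V v)) :
    f.linear v = v := by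
  have h0 : f (v +ᵥ (0 : V)) = v +ᵥ f 0 := congrArg (· (0 : V)) h
  rw [f.map_vadd, vadd_eq_add, vadd_eq_add] at h0
  exact add_right_cancel h0

theorem LinearEquiv.mapsTo_zpow {R M : Type*} [Semiring R] [AddCommMonoid M] [Module R M]
    {e : M ≃ₗ[R] M} {s : Set M} (h : MapsTo e s s) (h' : MapsTo e.symm s s) (j : ℤ) :
    MapsTo ⇑(e ^ j) s s := by
  induction j using Int.induction_on with
  | zero => exact mapsTo_id s
  | succ n ih => rw [zpow_add_one]; exact fun x hx => ih (h hx)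
  | pred n ih => rw [zpow_sub_one]; exact fun x hx => ih (h' hx)

namespace CatMapGroup

section castVec

variable {ι : Type*}

def castVec : (ι → ℤ) →+ (ι → ℝ) := (Int.castAddHom ℝ).compLeft ι

@[simp] lemma castVec_apply (w : ι → ℤ) (i : ι) : castVec w i = w i := rfl

lemma castVec_injective : Injective (castVec : (ι → ℤ) → ι → ℝ) :=
  fun _ _ h => funext fun i => Int.cast_injective (congrFun h i)

lemma finite_castVec_preimage [Finite ι] {K : Set (ι → ℝ)} (hK : IsCompact K) :
    (castVec ⁻¹' K).Finite := by
  have h := Tendsto.pi_map_coprodᵢ fun _ : ι => Int.tendsto_coe_cofinite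
  rw [coprodᵢ_cofinite, coprodᵢ_cocompact] at h
  exact tendsto_cofinite_cocompact_iff.1 h K hK

end castVec

def catMap : (Fin 3 → ℝ) ≃ₗ[ℝ] (Fin 3 → ℝ) :=
  .ofLinearMap (Matrix.toLin' !![2, 1, 0; 1, 1, 0; 0, 0, 1])
    (Matrix.toLin' !![1, -1, 0; -1, 2, 0; 0, 0, 1])
    (by rw [← Matrix.toLin'_mul, ← Matrix.toLin'_one, Matrix.one_fin_three]
        norm_num [Matrix.mul_fin_three])
    (by rw [← Matrix.toLin'_mul, ← Matrix.toLin'_one, Matrix.one_fin_three]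
        norm_num [Matrix.mul_fin_three])

lemma catMap_apply (x : Fin 3 → ℝ) : catMap x = ![2 * x 0 + x 1, x 0 + x 1, x 2] := by
  ext i; fin_cases i <;> simp [catMap, Matrix.mulVec, dotProduct, Fin.sum_univ_three]

lemma catMap_symm_apply (x : Fin 3 → ℝ) :
    catMap.symm x = ![x 0 - x 1, -x 0 + 2 * x 1, x 2] := by
  ext i
  fin_cases i <;> simp [catMap, Matrix.mulVec, dotProduct, Fin.sum_univ_three, sub_eq_add_neg]

lemma catMap_zpow_apply_two (j : ℤ) (x : Fin 3 → ℝ) : (catMap ^ j) x 2 = x 2 :=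
  LinearEquiv.mapsTo_zpow (s := {y : Fin 3 → ℝ | y 2 = x 2})
    (fun y hy => by simp_all [catMap_apply]) (fun y hy => by simp_all [catMap_symm_apply]) j
    (rfl : x 2 = x 2)

lemma catMap_zpow_mapsTo_range_castVec (j : ℤ) :
    MapsTo (catMap ^ j) (range castVec) (range castVec) := by
  refine LinearEquiv.mapsTo_zpow ?_ ?_ j
  · rintro _ ⟨w, rfl⟩
    exact ⟨![2 * w 0 + w 1, w 0 + w 1, w 2], by ext i; fin_cases i <;> simp [catMap_apply]⟩
  · rintro _ ⟨w, rfl⟩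
    exact ⟨![w 0 - w 1, -w 0 + 2 * w 1, w 2], by ext i; fin_cases i <;> simp [catMap_symm_apply]⟩

lemma catMap_pow_apply_one_pos {m : ℕ} (hm : 0 < m) {x : Fin 3 → ℝ} (h0 : 0 < x 0)
    (h1 : 0 ≤ x 1) : 0 < (catMap ^ m) x 1 := by
  obtain ⟨n, rfl⟩ := Nat.exists_eq_add_one_of_ne_zero hm.ne'
  have hpos : MapsTo catMap {y | 0 < y 0 ∧ 0 < y 1} {y | 0 < y 0 ∧ 0 < y 1} := by
    rintro y ⟨hy0, hy1⟩
    constructor <;> simp [catMap_apply] <;> linarith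
  rw [pow_succ, LinearEquiv.mul_apply, LinearEquiv.coe_pow]
  exact (hpos.iterate n (by constructor <;> simp [catMap_apply] <;> linarith)).2

/-- The element `(v, k)` of `ℤ² ⋊ ℤ` is encoded by the single integer vector `w = (v, k)`. -/
def catAffine (w : Fin 3 → ℤ) : (Fin 3 → ℝ) ≃ᵃ[ℝ] (Fin 3 → ℝ) :=
  (AffineEquiv.constVAdd ℝ _ (castVec w)).trans (catMap ^ w 2).toAffineEquiv

lemma catAffine_apply (w : Fin 3 → ℤ) (x : Fin 3 → ℝ) :
    catAffine w x = (catMap ^ w 2) (castVec w + x) := rfl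

lemma catAffine_linear (w : Fin 3 → ℤ) : (catAffine w).linear = catMap ^ w 2 := by
  ext; rfl

lemma catAffine_zero : catAffine 0 = 1 := by
  ext x : 1; simp [catAffine_apply]

lemma castVec_eq_of_catAffine_apply {w : Fin 3 → ℤ} {x y : Fin 3 → ℝ} (h : catAffine w x = y) :
    castVec w = (catMap ^ (-w 2)) y - x := by
  rw [← h, catAffine_apply, ← LinearEquiv.mul_apply, ← zpow_add, neg_add_cancel, zpow_zero,
    LinearEquiv.coe_one, id, add_sub_cancel_right]

lemma intCast_eq_of_catAffine_apply {w : Fin 3 → ℤ} {x y : Fin 3 → ℝ} (h : catAffine w x = y) :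
    (w 2 : ℝ) = y 2 - x 2 := by
  have h2 := congrFun (castVec_eq_of_catAffine_apply h) 2
  rwa [Pi.sub_apply, catMap_zpow_apply_two, castVec_apply] at h2

lemma exists_castVec_eq_catMap_zpow (j : ℤ) (w : Fin 3 → ℤ) :
    ∃ w' : Fin 3 → ℤ, castVec w' = (catMap ^ j) (castVec w) ∧ w' 2 = w 2 := by
  obtain ⟨w', hw'⟩ := catMap_zpow_mapsTo_range_castVec j (mem_range_self w)
  refine ⟨w', hw', Int.cast_injective (α := ℝ) ?_⟩
  have h2 := congrFun hw' 2
  rwa [catMap_zpow_apply_two, castVec_apply, castVec_apply] at h2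

lemma exists_catAffine_eq_mul (w w' : Fin 3 → ℤ) :
    ∃ w'', catAffine w'' = catAffine w * catAffine w' := by
  obtain ⟨u, hu, hu2⟩ := exists_castVec_eq_catMap_zpow (-w' 2) w
  have hBu : (catMap ^ w' 2) (castVec u) = castVec w := by simp [hu]
  refine ⟨w' + u, AffineEquiv.ext fun x => ?_⟩
  have hexp : (w' + u) 2 = w 2 + w' 2 := by simp [hu2, add_comm]
  rw [AffineEquiv.coe_mul, comp_apply, catAffine_apply, catAffine_apply, catAffine_apply, hexp,
    zpow_add, LinearEquiv.mul_apply, map_add castVec, add_right_comm, map_add (catMap ^ w' 2), hBu,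
    add_comm]

lemma exists_catAffine_eq_inv (w : Fin 3 → ℤ) : ∃ w', catAffine w' = (catAffine w)⁻¹ := by
  obtain ⟨u, hu, hu2⟩ := exists_castVec_eq_catMap_zpow (w 2) w
  refine ⟨-u, ?_⟩
  rw [eq_inv_iff_mul_eq_one]
  ext x : 1
  rw [AffineEquiv.coe_mul, comp_apply, catAffine_apply, catAffine_apply, Pi.neg_apply, hu2,
    map_neg castVec, hu, map_add (catMap ^ w 2), neg_add_cancel_left]
  simp

def catGroup : Subgroup ((Fin 3 → ℝ) ≃ᵃ[ℝ] (Fin 3 → ℝ)) where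
  carrier := range catAffine
  one_mem' := ⟨0, catAffine_zero⟩
  mul_mem' := by
    rintro _ _ ⟨w, rfl⟩ ⟨w', rfl⟩
    exact exists_catAffine_eq_mul w w'
  inv_mem' := by
    rintro _ ⟨w, rfl⟩
    exact exists_catAffine_eq_inv w

lemma finite_setOf_catAffine_image_inter_nonempty {K : Set (Fin 3 → ℝ)} (hK : IsCompact K) :
    {w : Fin 3 → ℤ | (catAffine w '' K ∩ K).Nonempty}.Finite := by
  have hKK := hK.prod hK
  set D := (fun p : (Fin 3 → ℝ) × (Fin 3 → ℝ) => p.2 2 - p.1 2) '' (K ×ˢ K)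
  have hF : {k : ℤ | (k : ℝ) ∈ D}.Finite :=
    tendsto_cofinite_cocompact_iff.1 Int.tendsto_coe_cofinite D (hKK.image (by fun_prop))
  set C := ⋃ k ∈ {k : ℤ | (k : ℝ) ∈ D},
    (fun p : (Fin 3 → ℝ) × (Fin 3 → ℝ) => (catMap ^ (-k)) p.2 - p.1) '' (K ×ˢ K)
  have hC : IsCompact C := hF.isCompact_biUnion fun k _ =>
    hKK.image ((LinearMap.continuous_of_finiteDimensional (catMap ^ (-k)).toLinearMap).comp
      continuous_snd |>.sub continuous_fst)
  refine (finite_castVec_preimage hC).subset ?_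
  rintro w ⟨_, ⟨x, hx, rfl⟩, hy⟩
  refine mem_biUnion (x := w 2) ⟨(x, _), ⟨hx, hy⟩, (intCast_eq_of_catAffine_apply rfl).symm⟩
    ⟨(x, _), ⟨hx, hy⟩, (castVec_eq_of_catAffine_apply rfl).symm⟩

lemma eq_zero_of_catAffine_apply_eq_self {w : Fin 3 → ℤ} {x : Fin 3 → ℝ} (h : catAffine w x = x) :
    w = 0 := by
  have h2 : w 2 = 0 := by exact_mod_cast (intCast_eq_of_catAffine_apply h).trans (sub_self _)
  have hw := castVec_eq_of_catAffine_apply h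
  rw [h2, neg_zero, zpow_zero, LinearEquiv.coe_one, id, sub_self] at hw
  exact castVec_injective (hw.trans (map_zero castVec).symm)

lemma exists_mem_catAffine_image_Icc (x : Fin 3 → ℝ) :
    ∃ w : Fin 3 → ℤ, x ∈ catAffine w '' Icc 0 1 := by
  set u := (catMap ^ (-⌊x 2⌋)) x
  refine ⟨fun i => ⌊u i⌋, fun i => Int.fract (u i),
    ⟨fun i => Int.fract_nonneg _, fun i => (Int.fract_lt_one _).le⟩, ?_⟩
  have hw : ⌊u 2⌋ = ⌊x 2⌋ := by simp only [u, catMap_zpow_apply_two]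
  have hu : castVec (fun i => ⌊u i⌋) + (fun i => Int.fract (u i)) = u :=
    funext fun i => Int.floor_add_fract (u i)
  rw [catAffine_apply, hw, hu]
  simp [u]

lemma not_commute_catAffine_pow {m p : ℕ} (hm : 0 < m) (hp : 0 < p) :
    ¬Commute (catAffine (Pi.single 2 1) ^ m) (catAffine (Pi.single 0 1) ^ p) := by
  intro h
  have ha : catAffine (Pi.single 0 1) = AffineEquiv.constVAdd ℝ _ (castVec (Pi.single 0 1)) := by
    ext x : 1
    simp [catAffine_apply, add_comm]
  rw [ha, ← AffineEquiv.constVAdd_nsmul] at h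
  have hlin := AffineEquiv.linear_apply_eq_of_commute_constVAdd h
  change AffineEquiv.linearHom (_ ^ m) _ = _ at hlin
  rw [map_pow, AffineEquiv.linearHom_apply, catAffine_linear, Pi.single_eq_same, zpow_one] at hlin
  have hpos := catMap_pow_apply_one_pos hm (x := p • castVec (Pi.single 0 1)) (by simpa using hp)
    (by simp)
  rw [hlin] at hpos
  simp at hpos

end CatMapGroup

open CatMapGroup in
/-- Auslander–Markus: there exist `n ≥ 1` and a subgroup `Γ` of the invertible
affine transformations of `ℝⁿ` acting properly discontinuously, freely and
cocompactly on `ℝⁿ`, such that `Γ` has no abelian finite-index subgroup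
(in particular `Γ` is not virtually `ℤⁿ`). -/
theorem exists_affine_crystallographic_not_virtually_abelian :
    ∃ n : ℕ, 1 ≤ n ∧
    ∃ Γ : Subgroup ((Fin n → ℝ) ≃ᵃ[ℝ] (Fin n → ℝ)),
      (∀ K : Set (Fin n → ℝ), IsCompact K →
        {γ : Γ | ((γ : (Fin n → ℝ) ≃ᵃ[ℝ] (Fin n → ℝ)) '' K ∩ K).Nonempty}.Finite) ∧
      (∀ γ : Γ, ∀ x : Fin n → ℝ, (γ : (Fin n → ℝ) ≃ᵃ[ℝ] (Fin n → ℝ)) x = x → γ = 1) ∧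
      (∃ K : Set (Fin n → ℝ), IsCompact K ∧
        ∀ x : Fin n → ℝ, ∃ γ : Γ, x ∈ (γ : (Fin n → ℝ) ≃ᵃ[ℝ] (Fin n → ℝ)) '' K) ∧
      ¬ ∃ H : Subgroup Γ, H.FiniteIndex ∧ ∀ a b : H, a * b = b * a := by
  refine ⟨3, by norm_num, catGroup, fun K hK => ?_, ?_, ⟨Icc 0 1, isCompact_Icc, fun x => ?_⟩, ?_⟩
  · refine ((finite_setOf_catAffine_image_inter_nonempty hK).image
      fun w => (⟨catAffine w, w, rfl⟩ : catGroup)).subset ?_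
    rintro ⟨_, w, rfl⟩ hw
    exact ⟨w, hw, rfl⟩
  · rintro ⟨_, w, rfl⟩ x hx
    obtain rfl := eq_zero_of_catAffine_apply_eq_self hx
    exact Subtype.ext catAffine_zero
  · obtain ⟨w, hw⟩ := exists_mem_catAffine_image_Icc x
    exact ⟨⟨_, w, rfl⟩, hw⟩
  · refine not_exists_abelian_finiteIndex_of_pow_not_commute
      (t := ⟨_, Pi.single 2 1, rfl⟩) (a := ⟨_, Pi.single 0 1, rfl⟩) fun m p hm hp h => ?_
    exact not_commute_catAffine_pow hm hp (by simpa using h.map catGroup.subtype)
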